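/- In the aggregated hyperlattice birth-death model with λ̄_k = C(k+I-1, I-1)λ and μ̄_k = C(k+I-2, I-1)μ, the steady-state probabilities satisfy P(N_k) = (λ/μ)^k · P(N_0) for all k ≥ 0, and hence if λ < μ and probabilities sum to 1, P(N_k) = (1 - λ/μ)(λ/μ)^k. -/
import Mathlib


/-- In the aggregated hyperlattice birth-death model with
`lamBar k = C(k+I-1, I-1) λ` and `muBar k = C(k+I-2, I-1) μ`, where `0 < λ < μ`,
the steady-state probabilities satisfy `P k = (λ/μ)^k * P 0` for all `k`, and hence
if the probabilities sum to 1 then `P k = (1 - λ/μ) * (λ/μ)^k`. -/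
theorem stmt_9 (I : ℕ) (hI : 1 ≤ I) (lam mu : ℝ) (hlam : 0 < lam) (hlm : lam < mu)
    (lamBar muBar P : ℕ → ℝ)
    (hlamBar : ∀ k : ℕ, lamBar k = ((k + I - 1).choose (I - 1) : ℝ) * lam)
    (hmuBar : ∀ k : ℕ, muBar k = ((k + I - 2).choose (I - 1) : ℝ) * mu)
    (hbal0 : lamBar 0 * P 0 = muBar 1 * P 1)
    (hbal : ∀ k : ℕ, 1 ≤ k →
      (lamBar k + muBar k) * P k
        = lamBar (k - 1) * P (k - 1) + muBar (k + 1) * P (k + 1)) :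
    (∀ k : ℕ, P k = (lam / mu) ^ k * P 0) ∧
      (HasSum P 1 → ∀ k : ℕ, P k = (1 - lam / mu) * (lam / mu) ^ k) := by
  have hmu : 0 < mu := hlam.trans hlm
  have hr0 : 0 < lam / mu := div_pos hlam hmu
  have hr1 : lam / mu < 1 := (div_lt_one hmu).mpr hlm
  have hch : ∀ k : ℕ, 0 < ((k + I - 1).choose (I - 1) : ℝ) := by
    intro k
    have h : I - 1 ≤ k + I - 1 := by omega
    exact_mod_cast Nat.choose_pos h
  have hmub : ∀ k : ℕ, muBar (k + 1) = ((k + I - 1).choose (I - 1) : ℝ) * mu := by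
    intro k
    rw [hmuBar]
    congr 3
    omega
  have hdb : ∀ k : ℕ, lamBar k * P k = muBar (k + 1) * P (k + 1) := by
    intro k
    induction k with
    | zero => exact hbal0
    | succ n ih =>
      have h := hbal (n + 1) (by omega)
      simp only [Nat.add_sub_cancel] at h
      rw [add_mul] at h
      linarith
  have hstep : ∀ k : ℕ, P (k + 1) = (lam / mu) * P k := by
    intro k
    have h := hdb k
    rw [hlamBar, hmub k, mul_assoc, mul_assoc] at h
    have h2 : lam * P k = mu * P (k + 1) := mul_left_cancel₀ (ne_of_gt (hch k)) h
    field_simp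
    linarith
  have hmain : ∀ k : ℕ, P k = (lam / mu) ^ k * P 0 := by
    intro k
    induction k with
    | zero => simp
    | succ n ih => rw [hstep n, ih, pow_succ]; ring
  refine ⟨hmain, fun hsum k => ?_⟩
  have hgeo : HasSum (fun k : ℕ => (lam / mu) ^ k * P 0) ((1 - lam / mu)⁻¹ * P 0) :=
    (hasSum_geometric_of_lt_one hr0.le hr1).mul_right (P 0)
  have hsum' : HasSum (fun k : ℕ => (lam / mu) ^ k * P 0) 1 := by
    have : P = fun k : ℕ => (lam / mu) ^ k * P 0 := funext hmain
    rwa [this] at hsum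
  have hP0 : (1 - lam / mu)⁻¹ * P 0 = 1 := hgeo.unique hsum'
  have h1r : (1 : ℝ) - lam / mu ≠ 0 := by linarith
  have : P 0 = 1 - lam / mu := by
    field_simp at hP0 ⊢
    rw [div_eq_one_iff_eq (by linarith : mu - lam ≠ 0)] at hP0
    linarith
  rw [hmain k, this]
  ring
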